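/- Let C be a nodal curve of genus g ≥ 2, X a component, and e_bar a multidegree of total degree e that is semistable. Suppose Y is a nonempty connected proper subcurve with X ⊆ Y and that some connected component Z of Y' satisfies e_Z − (e/(2g−2))·deg(ω_C|_Z) < −1/2 while every connected component W of Y' satisfies e_W − (e/(2g−2))·deg(ω_C|_W) ≤ 1/2. Then e_bar is X-quasistable at Y, i.e. e_Y − (e/(2g−2))·deg(ω_C|_Y) > −k_Y/2. -/

import Mathlib

open Finset

/-- An abstract (combinatorial) model of a nodal curve: a finite set of irreducible
components `V` (with geometric genus `w v`), and a finite set of nodes `N`, each node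
lying on the (unordered pair of) components recorded by `ends`. -/
structure NodalCurve where
  V : Type
  N : Type
  [instFV : Fintype V]
  [instDV : DecidableEq V]
  [instFN : Fintype N]
  [instDN : DecidableEq N]
  ends : N → Sym2 V
  w : V → ℕ

namespace NodalCurve

variable (C : NodalCurve)

instance : Fintype C.V := C.instFV
instance : DecidableEq C.V := C.instDV
instance : Fintype C.N := C.instFN
instance : DecidableEq C.N := C.instDN

/-- The dual graph of the curve (as a simple graph on the components). -/
def graph : SimpleGraph C.V :=
  SimpleGraph.fromRel (fun u v => ∃ n, C.ends n = s(u, v))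

/-- The number of branches (ends) of the node `n` lying on the subcurve `S`. -/
def endsIn (S : Finset C.V) (n : C.N) : ℕ :=
  Sym2.lift ⟨fun a b => (if a ∈ S then 1 else 0) + (if b ∈ S then 1 else 0),
    fun _ _ => add_comm _ _⟩ (C.ends n)

/-- `k S = #(Y ∩ Y')`: the number of nodes where the subcurve `S` meets its complement. -/
def k (S : Finset C.V) : ℕ := (univ.filter fun n => C.endsIn S n = 1).card

/-- nodes both of whose branches lie on `S`. -/
def internalNodes (S : Finset C.V) : ℕ := (univ.filter fun n => C.endsIn S n = 2).card

/-- The (arithmetic) genus of the curve. -/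
def genus : ℤ :=
  ∑ v, (C.w v : ℤ) + (Fintype.card C.N : ℤ) - (Fintype.card C.V : ℤ) + 1

/-- The genus `1 - χ(O_Y)` of a (connected) subcurve with components `S`. -/
def genusSub (S : Finset C.V) : ℤ :=
  ∑ v ∈ S, (C.w v : ℤ) + (C.internalNodes S : ℤ) - (S.card : ℤ) + 1

/-- `χ(O_Y)` for the subcurve `Y` with components `S`. -/
def chiO (S : Finset C.V) : ℤ :=
  (S.card : ℤ) - ∑ v ∈ S, (C.w v : ℤ) - (C.internalNodes S : ℤ)

/-- The degree of `ω_C` restricted to the subcurve with components `S`. -/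
def degω (S : Finset C.V) : ℤ :=
  ∑ v ∈ S, (2 * (C.w v : ℤ) - 2) + ∑ n, (C.endsIn S n : ℤ)

/-- Connectedness of the subcurve with components `S`. -/
def connectedSub (S : Finset C.V) : Prop := (C.graph.induce (S : Set C.V)).Connected

/-- Connectedness of the curve. -/
def Conn : Prop := C.graph.Connected

/-- The curve is of compact type: every node is separating, i.e. the dual graph
(with its multiple edges and loops) is a tree. -/
def CompactType : Prop :=
  Function.Injective C.ends ∧ (∀ n, ¬ (C.ends n).IsDiag) ∧ C.graph.IsTree

/-- Deligne–Mumford stability. -/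
def Stable : Prop := ∀ v, 0 < 2 * (C.w v : ℤ) - 2 + ∑ n, (C.endsIn {v} n : ℤ)

/-- A tail: a subcurve meeting its complement in exactly one node. -/
def isTail (S : Finset C.V) : Prop := C.k S = 1

/-- The degree `d_Y` of a multidegree `e` on the subcurve with components `S`. -/
def degSub (e : C.V → ℤ) (S : Finset C.V) : ℤ := ∑ v ∈ S, e v

/-- The total degree of a multidegree. -/
def totalDeg (e : C.V → ℤ) : ℤ := ∑ v, e v

/-- Semistability (w.r.t. the canonical polarization) at the subcurve `S`:
`|d_Y - d·deg(ω_C|_Y)/(2g-2)| ≤ k_Y/2`. -/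
def semistableAt (e : C.V → ℤ) (S : Finset C.V) : Prop :=
  |(C.degSub e S : ℚ) - (C.totalDeg e : ℚ) * (C.degω S : ℚ) / (2 * (C.genus : ℚ) - 2)|
    ≤ (C.k S : ℚ) / 2

/-- The strict lower inequality of quasistability at the subcurve `S`:
`d_Y - d·deg(ω_C|_Y)/(2g-2) > -k_Y/2`. -/
def quasistableLowAt (e : C.V → ℤ) (S : Finset C.V) : Prop :=
  -((C.k S : ℚ) / 2) <
    (C.degSub e S : ℚ) - (C.totalDeg e : ℚ) * (C.degω S : ℚ) / (2 * (C.genus : ℚ) - 2)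

/-- A semistable multidegree. -/
def semistable (e : C.V → ℤ) : Prop :=
  ∀ S : Finset C.V, S.Nonempty → S ≠ univ → C.semistableAt e S

/-- An `X`-quasistable multidegree. -/
def Xquasistable (X : C.V) (e : C.V → ℤ) : Prop :=
  C.semistable e ∧
    ∀ S : Finset C.V, S.Nonempty → S ≠ univ → X ∈ S → C.quasistableLowAt e S

/-- A `d̄`-big tail: `d_Z·deg(ω_C) - d·deg(ω_C|_Z) < 2g_Z - g`. -/
def isBigTail (e : C.V → ℤ) (S : Finset C.V) : Prop :=
  C.isTail S ∧
    C.degSub e S * (2 * C.genus - 2) - C.totalDeg e * C.degω S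
      < 2 * C.genusSub S - C.genus

/-- `S` is (the set of components of) a connected component of the complement `X'`
of the irreducible component `x`. -/
def complComponent (x : C.V) (S : Finset C.V) : Prop :=
  x ∉ S ∧ S.Nonempty ∧ C.connectedSub S ∧
    ∀ u ∈ S, ∀ v : C.V, C.graph.Adj u v → v ≠ x → v ∈ S

/-- `T` is (the set of components of) a connected component of the subcurve `S`. -/
def subComponent (S T : Finset C.V) : Prop :=
  T ⊆ S ∧ T.Nonempty ∧ C.connectedSub T ∧
    ∀ u ∈ T, ∀ v ∈ S, C.graph.Adj u v → v ∈ T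

/-- A central component: every connected component `Z` of `X'` has `g_Z < g/2`. -/
def central (x : C.V) : Prop :=
  ∀ S : Finset C.V, C.complComponent x S → 2 * C.genusSub S < C.genus

/-- A semicentral component: every connected component `Z` of `X'` has `g_Z ≤ g/2`. -/
def semicentral (x : C.V) : Prop :=
  ∀ S : Finset C.V, C.complComponent x S → 2 * C.genusSub S ≤ C.genus

end NodalCurve

/-!
Write `φ(S) = e_S - e·deg(ω_C|_S)/(2g-2)` (`deviation e S`). This is additive over disjoint
subcurves and `φ(Y) + φ(Y') = 0`, while `k_Y = k_{Y'}`. If `φ(Y) ≤ -k_Y/2`, then `φ(Y') ≥ k_{Y'}/2`.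
Split `Y' = Z ⊔ R` with `Z` a connected component: no node joins `Z` to `R`, so
`k_{Y'} = k_Z + k_R`, and semistability at `R` (a proper subcurve, as it misses `X`) gives
`φ(R) ≤ k_R/2`. Hence `φ(Z) ≥ k_Z/2 ≥ 0`, contradicting `φ(Z) < -1/2`.
-/

namespace NodalCurve

variable (C : NodalCurve)

def deviation (e : C.V → ℤ) (S : Finset C.V) : ℚ :=
  (C.degSub e S : ℚ) - (C.totalDeg e : ℚ) * (C.degω S : ℚ) / (2 * (C.genus : ℚ) - 2)

lemma endsIn_mk {S : Finset C.V} {n : C.N} {u v : C.V} (h : C.ends n = s(u, v)) :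
    C.endsIn S n = (if u ∈ S then 1 else 0) + (if v ∈ S then 1 else 0) := by
  rw [endsIn, h, Sym2.lift_mk]

lemma exists_ends_eq (n : C.N) : ∃ u v, C.ends n = s(u, v) :=
  Sym2.exists.mp ⟨C.ends n, rfl⟩

lemma graph_adj_of_ends_eq {n : C.N} {u v : C.V} (h : C.ends n = s(u, v)) (huv : u ≠ v) :
    C.graph.Adj u v := by
  rw [graph, SimpleGraph.fromRel_adj]
  exact ⟨huv, Or.inl ⟨n, h⟩⟩

lemma endsIn_union {S T : Finset C.V} (hST : Disjoint S T) (n : C.N) :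
    C.endsIn (S ∪ T) n = C.endsIn S n + C.endsIn T n := by
  obtain ⟨u, v, h⟩ := C.exists_ends_eq n
  simp only [C.endsIn_mk h, mem_union]
  have hu : ¬(u ∈ S ∧ u ∈ T) := fun h => disjoint_left.mp hST h.1 h.2
  have hv : ¬(v ∈ S ∧ v ∈ T) := fun h => disjoint_left.mp hST h.1 h.2
  split_ifs <;> simp_all

lemma endsIn_add_endsIn_compl (S : Finset C.V) (n : C.N) :
    C.endsIn S n + C.endsIn Sᶜ n = 2 := by
  obtain ⟨u, v, h⟩ := C.exists_ends_eq n
  simp only [C.endsIn_mk h, mem_compl]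
  split_ifs <;> simp_all

lemma endsIn_empty (n : C.N) : C.endsIn ∅ n = 0 := by
  obtain ⟨u, v, h⟩ := C.exists_ends_eq n
  simp [C.endsIn_mk h]

lemma endsIn_univ (n : C.N) : C.endsIn univ n = 2 := by
  simpa [C.endsIn_empty] using C.endsIn_add_endsIn_compl ∅ n

lemma k_compl (S : Finset C.V) : C.k Sᶜ = C.k S := by
  unfold k
  congr 1
  ext n
  have := C.endsIn_add_endsIn_compl S n
  simp only [mem_filter, mem_univ, true_and]
  omega

lemma k_empty : C.k ∅ = 0 := by
  simp [k, C.endsIn_empty]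

lemma k_union {S T : Finset C.V} (hST : Disjoint S T)
    (hsep : ∀ n, C.endsIn S n = 0 ∨ C.endsIn T n = 0) :
    C.k (S ∪ T) = C.k S + C.k T := by
  unfold k
  rw [← card_union_of_disjoint]
  · congr 1
    ext n
    simp only [mem_filter, mem_union, mem_univ, true_and, C.endsIn_union hST n]
    rcases hsep n with h | h <;> omega
  · rw [disjoint_filter]
    intro n _ hS
    rcases hsep n with h | h <;> omega

lemma endsIn_eq_zero_or_of_subComponent {S T : Finset C.V} (hT : C.subComponent S T)
    (n : C.N) : C.endsIn T n = 0 ∨ C.endsIn (S \ T) n = 0 := by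
  obtain ⟨u, v, h⟩ := C.exists_ends_eq n
  have closed : ∀ {a b}, C.ends n = s(a, b) → a ∈ T → b ∉ S \ T := by
    intro a b hab ha hb
    rw [mem_sdiff] at hb
    have hne : a ≠ b := fun h => hb.2 (h ▸ ha)
    exact hb.2 (hT.2.2.2 a ha b hb.1 (C.graph_adj_of_ends_eq hab hne))
  have huv := @closed u v h
  have hvu := @closed v u (h.trans Sym2.eq_swap)
  simp only [C.endsIn_mk h]
  split_ifs <;> simp_all

lemma degSub_union (e : C.V → ℤ) {S T : Finset C.V} (hST : Disjoint S T) :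
    C.degSub e (S ∪ T) = C.degSub e S + C.degSub e T :=
  sum_union hST

lemma degω_union {S T : Finset C.V} (hST : Disjoint S T) :
    C.degω (S ∪ T) = C.degω S + C.degω T := by
  simp only [degω, sum_union hST, C.endsIn_union hST, Nat.cast_add, sum_add_distrib]
  ring

lemma degω_univ : C.degω univ = 2 * C.genus - 2 := by
  simp only [degω, genus, C.endsIn_univ, sum_sub_distrib, ← mul_sum, sum_const, card_univ]
  push_cast
  ring

lemma deviation_union (e : C.V → ℤ) {S T : Finset C.V} (hST : Disjoint S T) :
    C.deviation e (S ∪ T) = C.deviation e S + C.deviation e T := by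
  simp only [deviation, C.degSub_union e hST, C.degω_union hST]
  push_cast
  ring

lemma deviation_compl (hg : C.genus ≠ 1) (e : C.V → ℤ) (S : Finset C.V) :
    C.deviation e Sᶜ = -C.deviation e S := by
  have hD : 2 * (C.genus : ℚ) - 2 ≠ 0 := by
    intro h
    exact hg (by exact_mod_cast (by linarith : (C.genus : ℚ) = 1))
  have huniv : C.deviation e univ = 0 := by
    rw [deviation, C.degω_univ]
    push_cast
    rw [mul_div_cancel_right₀ _ hD]
    exact sub_self _
  rw [← union_compl S, C.deviation_union e disjoint_compl_right] at huniv
  linarith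

lemma deviation_le_of_semistable {e : C.V → ℤ} (hss : C.semistable e) {S : Finset C.V}
    (hS : S ≠ univ) : C.deviation e S ≤ C.k S / 2 := by
  rcases S.eq_empty_or_nonempty with rfl | hne
  · simp [deviation, degSub, degω, C.endsIn_empty, C.k_empty]
  · exact le_of_abs_le (hss S hne hS)

lemma sub_deviation_le_deviation_of_subComponent_compl (hg : C.genus ≠ 1) {e : C.V → ℤ}
    (hss : C.semistable e) {X : C.V} {Y Z : Finset C.V} (hXY : X ∈ Y)
    (hZ : C.subComponent Yᶜ Z) :
    ((C.k Z : ℚ) - C.k Y) / 2 - C.deviation e Y ≤ C.deviation e Z := by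
  have hsplit : Z ∪ (Yᶜ \ Z) = Yᶜ := union_sdiff_of_subset hZ.1
  have hk := C.k_union disjoint_sdiff (C.endsIn_eq_zero_or_of_subComponent hZ)
  rw [hsplit, C.k_compl] at hk
  have hdev := C.deviation_union e (disjoint_sdiff : Disjoint Z (Yᶜ \ Z))
  rw [hsplit, C.deviation_compl hg] at hdev
  have hX : X ∉ Yᶜ \ Z := by simp [hXY]
  have hrest : C.deviation e (Yᶜ \ Z) ≤ C.k (Yᶜ \ Z) / 2 :=
    C.deviation_le_of_semistable hss fun h => hX (h ▸ mem_univ X)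
  rw [hk]
  push_cast
  linarith

end NodalCurve

theorem quasistableLowAt_of_component_bounds_general (C : NodalCurve)
    (hg : 2 ≤ C.genus) (X : C.V) (e : C.V → ℤ) (hss : C.semistable e)
    (Y : Finset C.V) (hXY : X ∈ Y)
    (hZ : ∃ Z : Finset C.V, C.subComponent Yᶜ Z ∧
        (C.degSub e Z : ℚ) - (C.totalDeg e : ℚ) * (C.degω Z : ℚ)
            / (2 * (C.genus : ℚ) - 2) < -(1 / 2)) :
    C.quasistableLowAt e Y := by
  obtain ⟨Z, hZ, hZlow⟩ := hZ
  change -((C.k Y : ℚ) / 2) < C.deviation e Y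
  change C.deviation e Z < -(1 / 2) at hZlow
  by_contra! hY
  have hZdev := C.sub_deviation_le_deviation_of_subComponent_compl (by omega) hss hXY hZ
  have hkZ : (0 : ℚ) ≤ C.k Z := Nat.cast_nonneg _
  linarith

/-- if `e` is semistable, `Y` is a nonempty connected proper subcurve
containing `X`, some connected component `Z` of `Y'` satisfies
`e_Z - (e/(2g-2))·deg(ω_C|_Z) < -1/2`, and every connected component `W` of `Y'`
satisfies `e_W - (e/(2g-2))·deg(ω_C|_W) ≤ 1/2`, then `e` is `X`-quasistable at `Y`. -/
theorem quasistableLowAt_of_component_bounds (C : NodalCurve) (hconn : C.Conn)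
    (hg : 2 ≤ C.genus) (X : C.V) (e : C.V → ℤ) (hss : C.semistable e)
    (Y : Finset C.V) (h1 : Y.Nonempty) (h2 : Y ≠ Finset.univ)
    (h3 : C.connectedSub Y) (hXY : X ∈ Y)
    (hZ : ∃ Z : Finset C.V, C.subComponent Yᶜ Z ∧
        (C.degSub e Z : ℚ) - (C.totalDeg e : ℚ) * (C.degω Z : ℚ)
            / (2 * (C.genus : ℚ) - 2) < -(1 / 2))
    (hW : ∀ W : Finset C.V, C.subComponent Yᶜ W →
        (C.degSub e W : ℚ) - (C.totalDeg e : ℚ) * (C.degω W : ℚ)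
            / (2 * (C.genus : ℚ) - 2) ≤ 1 / 2) :
    C.quasistableLowAt e Y :=
  quasistableLowAt_of_component_bounds_general C hg X e hss Y hXY hZ
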